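/- arXiv:1010.2066 — 6 statements merged into one kernel-verified Lean document; each statement's English description precedes it below -/
import Mathlib

section
/- For every x > 0, 1/(2x) ≤ log x − ψ(x) ≤ 1/x, where ψ is the digamma function. -/
/-!
`log Γ` is convex on `(0, ∞)` and `log Γ (x + 1) = log Γ x + log x`, so `log x` is the slope of
`log Γ` on `[x, x + 1]` and lies between `ψ x` and `ψ (x + 1) = ψ x + 1 / x`; this is the upper
bound. For the lower bound, `F y = log y - ψ y - 1 / (2y)` satisfies `|F y| ≤ 1 / (2y)` by the
same two estimates, and `F (y + 1) ≤ F y` because the trapezoidal rule overestimates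
`log (y + 1) - log y = ∫ 1/t` over `[y, y + 1]`. Hence `F x ≥ lim F (x + n) = 0`.
-/

/-- The digamma function `ψ(x) = d/dx log Γ(x)`. -/
noncomputable def digamma (x : ℝ) : ℝ := deriv (fun y => Real.log (Real.Gamma y)) x

open Real Set Filter Topology

lemma Real.log_add_one_sub_log_le {y : ℝ} (hy : 0 < y) :
    log (y + 1) - log y ≤ (y⁻¹ + (y + 1)⁻¹) / 2 := by
  have hu : 0 < (y + 1) / y := by positivity
  have hlog : 0 ≤ log ((y + 1) / y) := log_nonneg (by rw [le_div_iff₀ hy]; linarith)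
  -- the trapezoid bound is `t ≤ sinh t` at `t = log ((y + 1) / y)`
  have h := self_le_sinh_iff.mpr hlog
  rw [sinh_log hu, log_div (by positivity) hy.ne'] at h
  calc log (y + 1) - log y ≤ ((y + 1) / y - ((y + 1) / y)⁻¹) / 2 := h
    _ = (y⁻¹ + (y + 1)⁻¹) / 2 := by field_simp; ring

lemma differentiableAt_log_Gamma {x : ℝ} (hx : 0 < x) :
    DifferentiableAt ℝ (fun y => log (Gamma y)) x :=
  (differentiableAt_Gamma fun m => by linarith [(m.cast_nonneg : (0 : ℝ) ≤ m)]).log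
    (Gamma_pos_of_pos hx).ne'

lemma log_Gamma_add_one {x : ℝ} (hx : 0 < x) :
    log (Gamma (x + 1)) = log (Gamma x) + log x := by
  rw [Gamma_add_one hx.ne', log_mul hx.ne' (Gamma_pos_of_pos hx).ne', add_comm]

lemma digamma_add_one {x : ℝ} (hx : 0 < x) : digamma (x + 1) = digamma x + 1 / x := by
  have hrec : (fun y => log (Gamma (y + 1))) =ᶠ[𝓝 x] fun y => log (Gamma y) + log y := by
    filter_upwards [eventually_gt_nhds hx] with y hy using log_Gamma_add_one hy
  unfold digamma
  rw [← deriv_comp_add_const, hrec.deriv_eq, one_div]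
  exact ((differentiableAt_log_Gamma hx).hasDerivAt.add (hasDerivAt_log hx.ne')).deriv

lemma slope_log_Gamma {x : ℝ} (hx : 0 < x) :
    slope (fun y => log (Gamma y)) x (x + 1) = log x := by
  rw [slope_def_field, log_Gamma_add_one hx]
  ring

lemma digamma_le_log {x : ℝ} (hx : 0 < x) : digamma x ≤ log x := by
  rw [← slope_log_Gamma hx]
  exact convexOn_log_Gamma.deriv_le_slope (mem_Ioi.mpr hx) (mem_Ioi.mpr (by linarith))
    (by linarith) (differentiableAt_log_Gamma hx)

lemma log_le_digamma_add_one {x : ℝ} (hx : 0 < x) : log x ≤ digamma (x + 1) := by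
  rw [← slope_log_Gamma hx]
  exact convexOn_log_Gamma.slope_le_deriv (mem_Ioi.mpr hx) (mem_Ioi.mpr (by linarith))
    (by linarith) (differentiableAt_log_Gamma (by linarith))

lemma log_sub_digamma_le {x : ℝ} (hx : 0 < x) : log x - digamma x ≤ 1 / x := by
  linarith [log_le_digamma_add_one hx, digamma_add_one hx]

lemma abs_log_sub_digamma_sub_le {y : ℝ} (hy : 0 < y) :
    |log y - digamma y - 1 / (2 * y)| ≤ 1 / (2 * y) := by
  have hhalf : 1 / y = 1 / (2 * y) + 1 / (2 * y) := by field_simp; ring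
  rw [abs_le]
  constructor <;> linarith [digamma_le_log hy, log_sub_digamma_le hy]

lemma tendsto_log_sub_digamma_sub :
    Tendsto (fun y => log y - digamma y - 1 / (2 * y)) atTop (𝓝 0) := by
  have hbound : Tendsto (fun y : ℝ => 1 / (2 * y)) atTop (𝓝 0) :=
    tendsto_const_nhds.div_atTop (tendsto_id.const_mul_atTop two_pos)
  refine squeeze_zero_norm' ?_ hbound
  filter_upwards [eventually_gt_atTop 0] with y hy using abs_log_sub_digamma_sub_le hy

lemma log_sub_digamma_sub_add_one_le {y : ℝ} (hy : 0 < y) :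
    log (y + 1) - digamma (y + 1) - 1 / (2 * (y + 1))
      ≤ log y - digamma y - 1 / (2 * y) := by
  have htrap := log_add_one_sub_log_le hy
  have hhalf : 1 / y + 1 / (2 * (y + 1)) - 1 / (2 * y) = (y⁻¹ + (y + 1)⁻¹) / 2 := by
    field_simp; ring
  rw [digamma_add_one hy]
  linarith

lemma half_inv_le_log_sub_digamma {x : ℝ} (hx : 0 < x) :
    1 / (2 * x) ≤ log x - digamma x := by
  set u : ℕ → ℝ := fun n => log (x + n) - digamma (x + n) - 1 / (2 * (x + n))
  have hanti : Antitone u := antitone_nat_of_succ_le fun n => by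
    simpa only [u, Nat.cast_succ, add_assoc] using
      log_sub_digamma_sub_add_one_le (by positivity : 0 < x + n)
  have hlim : Tendsto u atTop (𝓝 0) :=
    tendsto_log_sub_digamma_sub.comp
      (tendsto_atTop_add_const_left _ _ tendsto_natCast_atTop_atTop)
  have h0 : 0 ≤ u 0 := hanti.le_of_tendsto hlim 0
  simp only [u, Nat.cast_zero, add_zero] at h0
  linarith

theorem stmt2 :
    ∀ x : ℝ, 0 < x →
      1 / (2 * x) ≤ Real.log x - digamma x ∧ Real.log x - digamma x ≤ 1 / x := by
  intro x hx
  exact ⟨half_inv_le_log_sub_digamma hx, log_sub_digamma_le hx⟩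
end

section
/- The function g₁(p) = e^{-(p-1)} (p-1)^{p-1} / Γ(p) for p > 1, with g₁(1) = 1, is decreasing in p on [1,∞). -/
/-!
Write `g₁ = exp ∘ φ` with `φ(p) = (p - 1) log (p - 1) - (p - 1) - log Γ(p)`, so that
`φ'(p) = log (p - 1) - ψ(p)` where `ψ = Γ'/Γ`. Since `Γ(p) = (p - 1) Γ(p - 1)`, `log (p - 1)` is the
slope of `log Γ` over `[p - 1, p]`, and the log-convexity of `Γ` bounds that slope by `ψ(p)`.
Hence `φ' ≤ 0` on `(1, ∞)`.
-/

open Real Set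

namespace Real

lemma rpow_self_eq_exp_mul_log {x : ℝ} (hx : 0 ≤ x) : x ^ x = exp (x * log x) := by
  rcases hx.eq_or_lt with rfl | hx
  · simp
  · rw [rpow_def_of_pos hx, mul_comm]

lemma hasDerivAt_log_Gamma {s : ℝ} (hs : 0 < s) :
    HasDerivAt (fun x => log (Gamma x)) (logDeriv Gamma s) s :=
  ((differentiableOn_Gamma_Ioi s hs).differentiableAt (Ioi_mem_nhds hs)).hasDerivAt.log
    (Gamma_pos_of_pos hs).ne'

lemma log_le_logDeriv_Gamma_add_one {x : ℝ} (hx : 0 < x) : log x ≤ logDeriv Gamma (x + 1) := by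
  have hx1 : 0 < x + 1 := by linarith
  calc log x = slope (log ∘ Gamma) x (x + 1) := by
        rw [slope_def_field, Function.comp_apply, Function.comp_apply, Gamma_add_one hx.ne',
          log_mul hx.ne' (Gamma_pos_of_pos hx).ne']
        ring
    _ ≤ logDeriv Gamma (x + 1) :=
        convexOn_log_Gamma.slope_le_of_hasDerivAt hx hx1 (lt_add_one x) (hasDerivAt_log_Gamma hx1)

end Real

/-- `log g₁(p)`: the `Gamma(p, 1)` density attains its supremum at its mode `x = p - 1`. -/
noncomputable def logSupGammaDensity (p : ℝ) : ℝ :=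
  (p - 1) * log (p - 1) - (p - 1) - log (Gamma p)

lemma exp_logSupGammaDensity {p : ℝ} (hp : 1 ≤ p) :
    exp (logSupGammaDensity p) = exp (-(p - 1)) * (p - 1) ^ (p - 1) / Gamma p := by
  rw [logSupGammaDensity, exp_sub, exp_sub, exp_log (Gamma_pos_of_pos (by linarith)),
    rpow_self_eq_exp_mul_log (by linarith), exp_neg]
  ring

lemma hasDerivAt_logSupGammaDensity {p : ℝ} (hp : 1 < p) :
    HasDerivAt logSupGammaDensity (log (p - 1) - logDeriv Gamma p) p := by
  have hshift : HasDerivAt (fun x : ℝ => x - 1) 1 p := (hasDerivAt_id p).sub_const 1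
  have hmul_log := (hasDerivAt_mul_log (sub_pos.2 hp).ne').comp p hshift
  exact ((hmul_log.sub hshift).sub (hasDerivAt_log_Gamma (by linarith))).congr_deriv (by ring)

lemma continuousOn_logSupGammaDensity : ContinuousOn logSupGammaDensity (Ici 1) := by
  have hshift : Continuous fun x : ℝ => x - 1 := continuous_sub_right 1
  have hpos : Ici (1 : ℝ) ⊆ Ioi 0 := Ici_subset_Ioi.2 one_pos
  have hlogΓ : ContinuousOn (fun x => log (Gamma x)) (Ici 1) :=
    (differentiableOn_Gamma_Ioi.continuousOn.mono hpos).log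
      fun x hx => (Gamma_pos_of_pos (hpos hx)).ne'
  exact ((continuous_mul_log.comp hshift).sub hshift).continuousOn.sub hlogΓ

lemma antitoneOn_logSupGammaDensity : AntitoneOn logSupGammaDensity (Ici 1) := by
  refine antitoneOn_of_hasDerivWithinAt_nonpos (f' := fun p => log (p - 1) - logDeriv Gamma p)
    (convex_Ici 1) continuousOn_logSupGammaDensity (fun p hp => ?_) fun p hp => ?_
  · rw [interior_Ici] at hp
    exact (hasDerivAt_logSupGammaDensity hp).hasDerivWithinAt
  · rw [interior_Ici, mem_Ioi] at hp
    have hslope := log_le_logDeriv_Gamma_add_one (sub_pos.2 hp)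
    rw [sub_add_cancel] at hslope
    exact sub_nonpos.2 hslope

/-- `g₁(p) = e^{-(p-1)} (p-1)^{p-1} / Γ(p)` (equal to `1` at `p = 1`, since `0^0 = 1`
for the real power) is decreasing on `[1,∞)`. -/
theorem stmt7 :
    AntitoneOn (fun p : ℝ => Real.exp (-(p - 1)) * (p - 1) ^ (p - 1) / Real.Gamma p)
      (Set.Ici 1) := by
  intro a ha b hb hab
  simp only [← exp_logSupGammaDensity ha, ← exp_logSupGammaDensity hb]
  exact exp_le_exp.2 (antitoneOn_logSupGammaDensity ha hb hab)
end

section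
/- For all p > 2, e^{2√(p−1)} ((√(p−1) − 1)/(√(p−1) + 1))^{p−2} ≥ 1. -/
private lemma log_le_key (y : ℝ) (hy : 1 ≤ y) : Real.log y ≤ (y - y⁻¹) / 2 := by
  set f : ℝ → ℝ := fun x => (x - x⁻¹) / 2 - Real.log x with hf
  have hd : ∀ x ∈ Set.Ioi (1:ℝ), HasDerivAt f ((1 - (-(x^2)⁻¹)) / 2 - x⁻¹) x := by
    intro x hx
    have hx0 : x ≠ 0 := by have : (1:ℝ) < x := hx; linarith
    exact (((hasDerivAt_id x).sub (hasDerivAt_inv hx0)).div_const 2).sub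
      (Real.hasDerivAt_log hx0)
  have hmono : MonotoneOn f (Set.Ici 1) := by
    apply monotoneOn_of_deriv_nonneg (convex_Ici 1)
    · apply ContinuousOn.sub (ContinuousOn.div_const (ContinuousOn.sub continuousOn_id
        (ContinuousOn.inv₀ continuousOn_id (fun x hx => by
          simp only [id_eq]
          have h1 : (1:ℝ) ≤ x := hx
          intro h0; rw [h0] at h1; linarith))) 2)
      exact Real.continuousOn_log.mono (fun x hx => by
        have h1 : (1:ℝ) ≤ x := hx
        simp only [Set.mem_compl_iff, Set.mem_singleton_iff]
        intro h0; rw [h0] at h1; linarith)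
    · intro x hx
      rw [interior_Ici] at hx
      exact (hd x hx).differentiableAt.differentiableWithinAt
    · intro x hx
      rw [interior_Ici] at hx
      rw [(hd x hx).deriv]
      have hx1 : (1:ℝ) < x := hx
      have hx0 : (0:ℝ) < x := by linarith
      have heq : (1 - -(x ^ 2)⁻¹) / 2 - x⁻¹ = (x - 1)^2 / (2 * x^2) := by
        field_simp; ring
      rw [heq]; positivity
  have h1 : f 1 = 0 := by simp [hf]
  have := hmono (Set.self_mem_Ici) (show y ∈ Set.Ici 1 from hy) hy
  rw [h1] at this
  simpa [hf, sub_nonneg] using this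

theorem stmt11 :
    ∀ p : ℝ, 2 < p →
      1 ≤ Real.exp (2 * Real.sqrt (p - 1)) *
          ((Real.sqrt (p - 1) - 1) / (Real.sqrt (p - 1) + 1)) ^ (p - 2) := by
  intro p hp
  have hp1 : (1:ℝ) < p - 1 := by linarith
  set s := Real.sqrt (p - 1) with hs
  have hsq : s ^ 2 = p - 1 := Real.sq_sqrt (by linarith)
  have hs1 : 1 < s := by nlinarith [Real.sqrt_nonneg (p - 1), hsq]
  have hb : 0 < (s - 1) / (s + 1) := by
    apply div_pos <;> linarith
  rw [Real.rpow_def_of_pos hb, ← Real.exp_add, Real.one_le_exp_iff]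
  have hy1 : (1:ℝ) ≤ (s + 1) / (s - 1) := by
    rw [le_div_iff₀ (by linarith)]; linarith
  have hkey := log_le_key _ hy1
  have hp2 : (0:ℝ) < p - 2 := by linarith
  have hyv : ((s + 1) / (s - 1) - ((s + 1) / (s - 1))⁻¹) / 2 = 2 * s / (p - 2) := by
    rw [inv_div]
    rw [div_sub_div _ _ (by linarith : s - 1 ≠ 0) (by linarith : s + 1 ≠ 0)]
    rw [div_div, div_eq_div_iff (by nlinarith) (by linarith)]
    nlinarith [hsq]
  have hlogb : Real.log ((s - 1) / (s + 1)) = - Real.log ((s + 1) / (s - 1)) := by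
    rw [← Real.log_inv, inv_div]
  rw [hlogb]
  have hle : (p - 2) * Real.log ((s + 1) / (s - 1)) ≤ 2 * s := by
    rw [hyv] at hkey
    calc (p - 2) * Real.log ((s + 1) / (s - 1))
        ≤ (p - 2) * (2 * s / (p - 2)) :=
          mul_le_mul_of_nonneg_left hkey (le_of_lt hp2)
      _ = 2 * s := by field_simp
  linarith
end

section
/- For all u > 2, e^{2u} · ((u−1)(u−2)/((u+1)(u+2)))^{(u²−4)/3} · ((u−1)/(u+1))³ ≥ 1. -/
/-!
Taking logarithms, the claim is `ρ₂(u) ≥ 0`. For `0 ≤ t < 1`, `log ((1 + t) / (1 - t))` has the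
series `2 ∑ t^(2k+1) / (2k+1)`, whose tail after `n` terms is at most `2 t^(2n+1) / ((2n+1)(1 - t²))`.
Bounding the two negative logarithms of `ρ₂` this way with `n = 2` and `t = 1/u`, `t = 2/u`
leaves `(24u² - 36) / (15u³(u² - 1))`, which is positive for `u > 2`.
-/

open Real Finset

theorem Real.log_sub_log_le_sum_range_add {x : ℝ} (h₀ : 0 ≤ x) (h : x < 1) (n : ℕ) :
    log (1 + x) - log (1 - x) ≤
      ∑ i ∈ range n, 2 * (1 / (2 * i + 1)) * x ^ (2 * i + 1) +
        2 * x ^ (2 * n + 1) / ((2 * n + 1) * (1 - x ^ 2)) := by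
  have hseries := hasSum_log_sub_log_of_abs_lt_one (abs_lt.2 ⟨by linarith, h⟩)
  have htail := (hasSum_nat_add_iff' n).mpr hseries
  have hgeom := (hasSum_geometric_of_lt_one (sq_nonneg x) (by nlinarith)).mul_left
    (2 * x ^ (2 * n + 1) / (2 * n + 1))
  have hle := hasSum_le (fun k => ?_) htail hgeom
  · have hsum : 2 * x ^ (2 * n + 1) / (2 * n + 1) * (1 - x ^ 2)⁻¹ =
        2 * x ^ (2 * n + 1) / ((2 * n + 1) * (1 - x ^ 2)) := by
      rw [← div_eq_mul_inv, div_div]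
    linarith
  · have hcoeff : 1 / (2 * ((k + n : ℕ) : ℝ) + 1) ≤ 1 / (2 * n + 1) := by
      gcongr
      linarith [(Nat.cast_nonneg k : (0 : ℝ) ≤ k)]
    have hterm_nonneg : 0 ≤ 2 * (x ^ (2 * n + 1) * (x ^ 2) ^ k) := by positivity
    calc 2 * (1 / (2 * ((k + n : ℕ) : ℝ) + 1)) * x ^ (2 * (k + n) + 1)
        = 1 / (2 * ((k + n : ℕ) : ℝ) + 1) * (2 * (x ^ (2 * n + 1) * (x ^ 2) ^ k)) := by ring
      _ ≤ 1 / (2 * n + 1) * (2 * (x ^ (2 * n + 1) * (x ^ 2) ^ k)) := by gcongr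
      _ = 2 * x ^ (2 * n + 1) / (2 * n + 1) * (x ^ 2) ^ k := by ring

theorem Real.log_add_sub_log_sub_le {a b : ℝ} (ha : 0 ≤ a) (hab : a < b) :
    log (b + a) - log (b - a) ≤
      2 * a / b + 2 * a ^ 3 / (3 * b ^ 3) + 2 * a ^ 5 / (5 * b ^ 3 * (b ^ 2 - a ^ 2)) := by
  have hb : 0 < b := ha.trans_lt hab
  have hx := log_sub_log_le_sum_range_add (div_nonneg ha hb.le) ((div_lt_one hb).2 hab) 2
  have hplus : 1 + a / b = (b + a) / b := by field_simp
  have hminus : 1 - a / b = (b - a) / b := by field_simp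
  rw [hplus, hminus, log_div (by linarith) hb.ne', log_div (by linarith) hb.ne'] at hx
  convert hx using 1
  · ring
  · have : b ^ 2 - a ^ 2 ≠ 0 := by nlinarith
    have := hb.ne'
    norm_num [sum_range_succ]
    field_simp

noncomputable def rho2 (u : ℝ) : ℝ :=
  2 * u + (u ^ 2 - 4) / 3 * log ((u - 1) * (u - 2) / ((u + 1) * (u + 2))) +
    3 * log ((u - 1) / (u + 1))

theorem exp_rho2 {u : ℝ} (hu : 2 < u) :
    exp (rho2 u) = exp (2 * u) *
      ((u - 1) * (u - 2) / ((u + 1) * (u + 2))) ^ ((u ^ 2 - 4) / 3) *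
      ((u - 1) / (u + 1)) ^ (3 : ℕ) := by
  have hratio : 0 < (u - 1) / (u + 1) := div_pos (by linarith) (by linarith)
  rw [rho2, exp_add, exp_add, rpow_def_of_pos (div_pos (by nlinarith) (by nlinarith)),
    mul_comm (log _), ← exp_log hratio, ← exp_nat_mul, exp_log hratio, Nat.cast_ofNat]

theorem rho2_nonneg {u : ℝ} (hu : 2 < u) : 0 ≤ rho2 u := by
  have h1 : log (u + 1) - log (u - 1) ≤
      2 / u + 2 / (3 * u ^ 3) + 2 / (5 * u ^ 3 * (u ^ 2 - 1)) := by
    convert log_add_sub_log_sub_le zero_le_one (by linarith : (1 : ℝ) < u) using 1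
    norm_num
  have h2 : log (u + 2) - log (u - 2) ≤
      4 / u + 16 / (3 * u ^ 3) + 64 / (5 * u ^ 3 * (u ^ 2 - 4)) := by
    convert log_add_sub_log_sub_le zero_le_two hu using 1
    norm_num
  have hrho : rho2 u = 2 * u - (u ^ 2 - 4) / 3 *
      ((log (u + 1) - log (u - 1)) + (log (u + 2) - log (u - 2))) -
      3 * (log (u + 1) - log (u - 1)) := by
    rw [rho2, log_div (by nlinarith) (by nlinarith), log_div (by linarith) (by linarith),
      log_mul (by linarith) (by linarith), log_mul (by linarith) (by linarith)]
    ring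
  have hrational : 2 * u - (u ^ 2 - 4) / 3 *
      ((2 / u + 2 / (3 * u ^ 3) + 2 / (5 * u ^ 3 * (u ^ 2 - 1))) +
        (4 / u + 16 / (3 * u ^ 3) + 64 / (5 * u ^ 3 * (u ^ 2 - 4)))) -
      3 * (2 / u + 2 / (3 * u ^ 3) + 2 / (5 * u ^ 3 * (u ^ 2 - 1))) =
      (24 * u ^ 2 - 36) / (15 * u ^ 3 * (u ^ 2 - 1)) := by
    have : u ^ 2 - 1 ≠ 0 := by nlinarith
    have : u ^ 2 - 4 ≠ 0 := by nlinarith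
    have : u ≠ 0 := by linarith
    field_simp
    ring
  have hpos : 0 ≤ (24 * u ^ 2 - 36) / (15 * u ^ 3 * (u ^ 2 - 1)) :=
    div_nonneg (by nlinarith) (mul_pos (by positivity) (by nlinarith)).le
  have hweight : 0 ≤ (u ^ 2 - 4) / 3 := by nlinarith
  rw [hrho]
  linarith [mul_le_mul_of_nonneg_left (add_le_add h1 h2) hweight]

theorem stmt13 :
    ∀ u : ℝ, 2 < u →
      1 ≤ Real.exp (2 * u) *
          (((u - 1) * (u - 2)) / ((u + 1) * (u + 2))) ^ ((u ^ 2 - 4) / 3) *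
          ((u - 1) / (u + 1)) ^ (3 : ℕ) := by
  intro u hu
  rw [← exp_rho2 hu]
  exact one_le_exp (rho2_nonneg hu)
end

section
/- The function u ↦ 4u²/(u²−1) + (2u/3) log((u−1)(u−2)/((u+1)(u+2))) is nonpositive for all u > 2. -/
/-!
Write `L(t) = log (1 + t) - log (1 - t) = 2 (t + t³/3 + t⁵/5 + ⋯)`. For `u > 2` the logarithm in the
statement is `-(L (1/u) + L (2/u))`, and since the series has nonnegative terms for `t ≥ 0`, truncating
it after three terms gives `(2u/3) (L (1/u) + L (2/u)) ≥ 4 + 4/u² + 44/(5u⁴)`. The remaining rational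
inequality `4u²/(u² - 1) ≤ 4 + 4/u² + 44/(5u⁴)` is `24u² ≥ 44`.
-/

open Real Finset

lemma sum_range_le_log_sub_log {t : ℝ} (h0 : 0 ≤ t) (h1 : t < 1) (n : ℕ) :
    ∑ k ∈ range n, 2 * (1 / (2 * (k : ℝ) + 1)) * t ^ (2 * k + 1) ≤ log (1 + t) - log (1 - t) :=
  sum_le_hasSum _ (fun _ _ ↦ by positivity)
    (hasSum_log_sub_log_of_abs_lt_one (by rwa [abs_of_nonneg h0]))

lemma log_sub_log_ge {t : ℝ} (h0 : 0 ≤ t) (h1 : t < 1) :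
    2 * t + 2 * t ^ 3 / 3 + 2 * t ^ 5 / 5 ≤ log (1 + t) - log (1 - t) := by
  have h := sum_range_le_log_sub_log h0 h1 3
  simp only [sum_range_succ, sum_range_zero] at h
  norm_num at h
  linarith

lemma log_sub_div_add {a u : ℝ} (hu : 0 < u) (ha : a < u) (ha' : -a < u) :
    log ((u - a) / (u + a)) = -(log (1 + a / u) - log (1 - a / u)) := by
  have hsub : 0 < 1 - a / u := by rw [sub_pos, div_lt_one hu]; exact ha
  have hadd : 0 < 1 + a / u := by
    have : -a / u < 1 := by rwa [div_lt_one hu]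
    rw [neg_div] at this
    linarith
  have hfrac : (u - a) / (u + a) = (1 - a / u) / (1 + a / u) := by
    field_simp
  rw [hfrac, log_div hsub.ne' hadd.ne']
  ring

lemma four_sq_div_le {u : ℝ} (hu : 2 < u) :
    4 * u ^ 2 / (u ^ 2 - 1) ≤ (2 * u / 3) *
      ((2 * (1 / u) + 2 * (1 / u) ^ 3 / 3 + 2 * (1 / u) ^ 5 / 5) +
        (2 * (2 / u) + 2 * (2 / u) ^ 3 / 3 + 2 * (2 / u) ^ 5 / 5)) := by
  have hu0 : 0 < u := by linarith
  have hd : 0 < u ^ 2 - 1 := by nlinarith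
  rw [div_le_iff₀ hd]
  field_simp
  nlinarith [pow_pos hu0 4]

theorem stmt14 :
    ∀ u : ℝ, 2 < u →
      4 * u ^ 2 / (u ^ 2 - 1) +
        (2 * u / 3) * Real.log (((u - 1) * (u - 2)) / ((u + 1) * (u + 2))) ≤ 0 := by
  intro u hu
  have hu0 : 0 < u := by linarith
  have hlog : log (((u - 1) * (u - 2)) / ((u + 1) * (u + 2))) =
      -(log (1 + 1 / u) - log (1 - 1 / u)) + -(log (1 + 2 / u) - log (1 - 2 / u)) := by
    rw [mul_div_mul_comm, log_mul (div_pos (by linarith) (by linarith)).ne'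
      (div_pos (by linarith) (by linarith)).ne',
      log_sub_div_add hu0 (by linarith) (by linarith), log_sub_div_add hu0 (by linarith) (by linarith)]
  have h1 := log_sub_log_ge (t := 1 / u) (by positivity) (by rw [div_lt_one hu0]; linarith)
  have h2 := log_sub_log_ge (t := 2 / u) (by positivity) (by rw [div_lt_one hu0]; linarith)
  have hsum := mul_le_mul_of_nonneg_left (add_le_add h1 h2) (by positivity : (0 : ℝ) ≤ 2 * u / 3)
  rw [hlog]
  linarith [four_sq_div_le hu]
end

section
/- For p > 0 and every n ∈ ℕ, the n-th derivative of the Gamma(p,1) density satisfies d^n/dx^n f_p(x) = Σ_{i=0}^{n} C(n,i) (−1)^i f_{p−n+i}(x) for all x > 0, where f_q(x) = e^{-x} x^{q-1}/Γ(q) for q ∉ {0,−1,−2,…} and f_q ≡ 0 for q ∈ {0,−1,−2,…}. -/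
/- The density satisfies `f_q' = f_{q-1} - f_q` on `x > 0`, i.e. differentiation in `x` acts on the
shape parameter as the difference operator `Δ_[-1]`. Differentiation commutes with `Δ_[-1]`, so the
`n`-th derivative is `(Δ_[-1])^[n]` applied to `q ↦ f_q(x)` at `p`, and Newton's expansion of
`(Δ_[-1])^[n]` is the binomial sum. -/

/-- `f_q(x) = e^{-x} x^{q-1}/Γ(q)`; since `Γ` vanishes at nonpositive integers and
division by zero is zero in Lean, this is identically `0` for `q ∈ {0,-1,-2,…}`,
matching the paper's convention. -/
noncomputable def gammaDensity (q x : ℝ) : ℝ := Real.exp (-x) * x ^ (q - 1) / Real.Gamma q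

open fwdDiff

/-- A form of the recurrence `Γ(s + 1) = s Γ(s)` that also holds at `s = 0`. -/
theorem Real.inv_Gamma_eq_self_mul_inv_Gamma_add_one (s : ℝ) :
    (Real.Gamma s)⁻¹ = s * (Real.Gamma (s + 1))⁻¹ := by
  rcases ne_or_eq s 0 with hs | rfl
  · rw [Real.Gamma_add_one hs, mul_inv, mul_inv_cancel_left₀ hs]
  · rw [zero_add, Real.Gamma_zero, inv_zero, zero_mul]

theorem HasDerivAt.fwdDiff_iter {𝕜 E M : Type*} [NontriviallyNormedField 𝕜] [NormedAddCommGroup E]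
    [NormedSpace 𝕜 E] [AddCommMonoid M] {F : M → 𝕜 → E} {F' : M → E} {x : 𝕜} (h : M)
    (hF : ∀ q, HasDerivAt (F q) (F' q) x) (n : ℕ) (p : M) :
    HasDerivAt (fun y ↦ (Δ_[h])^[n] (fun q ↦ F q y) p) ((Δ_[h])^[n] F' p) x := by
  induction n generalizing F F' with
  | zero => exact hF p
  | succ n ih => exact ih fun q ↦ (hF (q + h)).sub (hF q)

theorem hasDerivAt_gammaDensity (q : ℝ) {x : ℝ} (hx : 0 < x) :
    HasDerivAt (gammaDensity q) (gammaDensity (q - 1) x - gammaDensity q x) x := by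
  have hexp : HasDerivAt (fun y ↦ Real.exp (-y)) (-Real.exp (-x)) x := by
    simpa using (hasDerivAt_neg x).exp
  have hpow : HasDerivAt (fun y ↦ y ^ (q - 1)) ((q - 1) * x ^ (q - 1 - 1)) x :=
    Real.hasDerivAt_rpow_const (Or.inl hx.ne')
  refine ((hexp.mul hpow).div_const (Real.Gamma q)).congr_deriv ?_
  rw [gammaDensity, gammaDensity, div_eq_mul_inv, div_eq_mul_inv, div_eq_mul_inv,
    Real.inv_Gamma_eq_self_mul_inv_Gamma_add_one (q - 1), sub_add_cancel]
  ring

theorem iteratedDeriv_gammaDensity (p : ℝ) (n : ℕ) {x : ℝ} (hx : 0 < x) :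
    iteratedDeriv n (gammaDensity p) x = (Δ_[-1])^[n] (fun q ↦ gammaDensity q x) p := by
  induction n generalizing x with
  | zero => rfl
  | succ n ih =>
    have hEq : iteratedDeriv n (gammaDensity p) =ᶠ[nhds x]
        fun y ↦ (Δ_[-1])^[n] (fun q ↦ gammaDensity q y) p :=
      Filter.eventually_of_mem (isOpen_Ioi.mem_nhds hx) fun y hy ↦ ih hy
    have hDiff := HasDerivAt.fwdDiff_iter (-1 : ℝ)
      (fun q ↦ hasDerivAt_gammaDensity q hx) n p
    rw [iteratedDeriv_succ, hEq.deriv_eq, hDiff.deriv, Function.iterate_succ_apply]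
    rfl

theorem stmt15 :
    ∀ p : ℝ, 0 < p → ∀ n : ℕ, ∀ x : ℝ, 0 < x →
      iteratedDeriv n (gammaDensity p) x =
        ∑ i ∈ Finset.range (n + 1),
          (n.choose i : ℝ) * (-1) ^ i * gammaDensity (p - n + i) x := by
  intro p _ n x hx
  rw [iteratedDeriv_gammaDensity p n hx, fwdDiff_iter_eq_sum_shift, ← Finset.sum_range_reflect]
  refine Finset.sum_congr rfl fun i hi ↦ ?_
  have hin : i ≤ n := Nat.lt_succ_iff.mp (Finset.mem_range.mp hi)
  rw [add_tsub_cancel_right, Nat.sub_sub_self hin, Nat.choose_symm hin, zsmul_eq_mul, nsmul_eq_mul,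
    Nat.cast_sub hin]
  push_cast
  rw [mul_comm ((-1 : ℝ) ^ i), show p + ((n : ℝ) - i) * -1 = p - n + i by ring]
end
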